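/- Let s and t be integers with min{s,t} ≥ 2, and let M be an (s,t)-spike of order m ≥ max{3s+t, s+3t} − 4. Then M is (2·min{s,t} − 1)-connected; that is, for every integer k with k < 2·min{s,t} − 1, there is no partition (P,Q) of E(M) with |P| ≥ k, |Q| ≥ k, and λ(P) ≤ k − 1. -/

import Mathlib

open Set Function

namespace Matroid

variable {α : Type*}

/-- A circuit of a matroid: a minimal dependent set. -/
def IsCircuit' (M : Matroid α) (C : Set α) : Prop := Minimal M.Dep C

/-- A cocircuit of a matroid: a circuit of the dual matroid. -/
def IsCocircuit' (M : Matroid α) (C : Set α) : Prop := M✶.IsCircuit' C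

/-- The `ℕ`-valued rank of a set `X` in a matroid `M`:
the size of a largest independent subset of `X`. -/
noncomputable def rk' (M : Matroid α) (X : Set α) : ℕ :=
  sSup {n : ℕ | ∃ I, M.Indep I ∧ I ⊆ X ∧ I.ncard = n}

/-- The connectivity function `λ(X) = r(X) + r(E − X) − r(M)`. -/
noncomputable def lam' (M : Matroid α) (X : Set α) : ℕ :=
  M.rk' X + M.rk' (M.E \ X) - M.rk' M.E

/-- The `(s,u,t,v)`-property: every `s`-element subset of the ground set is contained in a
circuit of size `u`, and every `t`-element subset is contained in a cocircuit of size `v`. -/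
def HasProp (M : Matroid α) (s u t v : ℕ) : Prop :=
  (∀ S ⊆ M.E, S.ncard = s → ∃ C, M.IsCircuit' C ∧ C.ncard = u ∧ S ⊆ C) ∧
  (∀ T ⊆ M.E, T.ncard = t → ∃ C, M.IsCocircuit' C ∧ C.ncard = v ∧ T ⊆ C)

/-- A `t`-echidna of order `n`: a family of `n` pairwise disjoint `2`-element subsets of the
ground set (spines) such that the union of any `t` spines is a circuit.
(A `t`-coechidna of `M` is a `t`-echidna of `M✶`.) -/
def IsEchidna (M : Matroid α) (t : ℕ) {n : ℕ} (S : Fin n → Set α) : Prop :=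
  (∀ i, S i ⊆ M.E) ∧ (∀ i, (S i).ncard = 2) ∧
  Pairwise (Function.onFun Disjoint S) ∧
  ∀ I : Finset (Fin n), I.card = t → M.IsCircuit' (⋃ i ∈ I, S i)

/-- `M` is an `(s,t)`-spike with associated partition `(A 1, …, A m)`: the `A i` are `m`
pairwise disjoint pairs partitioning the ground set, with `m ≥ max s t`, such that the union of
any `s` pairs is a circuit and the union of any `t` pairs is a cocircuit. -/
def IsSpike (M : Matroid α) (s t : ℕ) {m : ℕ} (A : Fin m → Set α) : Prop :=
  max s t ≤ m ∧ (⋃ i, A i) = M.E ∧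
  Pairwise (Function.onFun Disjoint A) ∧ (∀ i, (A i).ncard = 2) ∧
  (∀ I : Finset (Fin m), I.card = s → M.IsCircuit' (⋃ i ∈ I, A i)) ∧
  (∀ I : Finset (Fin m), I.card = t → M.IsCocircuit' (⋃ i ∈ I, A i))

end Matroid

universe u

open Matroid

/-!
Let `S` be a set, `p` the number of arms inside `S` and `p'` the number of arms meeting `S`.
Fewer than `s` whole arms inside `S`, together with one chosen element from each of at most
`m - t + 1` further arms meeting `S`, form an independent set: a circuit inside the whole arms
would be a proper subset of the circuit formed by `s` arms, and a circuit through a chosen element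
`e` of arm `j` would meet the cocircuit formed by arm `j` and `t - 1` unused arms exactly in `e`.
Hence `r(S) ≥ min(p, s - 1) + min(p', m - t + 1)` and `|S| ≤ p + p'`. Applied to the dual spike
this gives `r*(E) ≥ m - s + t`, i.e. `r(M) ≤ m + s - t`. For a partition `(P, Q)` the arms
meeting `P` are those not inside `Q`, and the resulting lower bound on `λ(P)` is at least `k`
once `m ≥ max{3s + t, s + 3t} - 4`.
-/

namespace Matroid

variable {α : Type*} {M : Matroid α} {B I X : Set α}

lemma Indep.ncard_le_rk'_of_subset (hE : M.E.Finite) (hI : M.Indep I) (hIX : I ⊆ X) :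
    I.ncard ≤ M.rk' X :=
  le_csSup ⟨M.E.ncard, by rintro n ⟨J, hJ, -, rfl⟩; exact ncard_le_ncard hJ.subset_ground hE⟩
    ⟨I, hI, hIX, rfl⟩

lemma IsBase.rk'_ground_eq_ncard (hE : M.E.Finite) (hB : M.IsBase B) :
    M.rk' M.E = B.ncard := by
  refine le_antisymm (csSup_le ⟨0, ∅, M.empty_indep, empty_subset _, ncard_empty α⟩ ?_)
    (hB.indep.ncard_le_rk'_of_subset hE hB.subset_ground)
  rintro n ⟨J, hJ, -, rfl⟩
  obtain ⟨B', hB', hJB'⟩ := hJ.exists_isBase_superset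
  exact (ncard_le_ncard hJB' (hE.subset hB'.subset_ground)).trans_eq
    (hB'.ncard_eq_ncard_of_isBase hB)

lemma rk'_ground_add_rk'_dual_ground (hE : M.E.Finite) :
    M.rk' M.E + M✶.rk' M.E = M.E.ncard := by
  obtain ⟨B, hB⟩ := M.exists_isBase
  rw [hB.rk'_ground_eq_ncard hE, ← dual_ground,
    hB.compl_isBase_dual.rk'_ground_eq_ncard (by simpa using hE), dual_ground,
    add_comm, ncard_sdiff_add_ncard_of_subset hB.subset_ground hE]

variable {m : ℕ}

open scoped Classical in
noncomputable def armsIn (A : Fin m → Set α) (S : Set α) : Finset (Fin m) :=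
  Finset.univ.filter fun i => A i ⊆ S

open scoped Classical in
noncomputable def armsMeeting (A : Fin m → Set α) (S : Set α) : Finset (Fin m) :=
  Finset.univ.filter fun i => (A i ∩ S).Nonempty

variable {A : Fin m → Set α} {S : Set α} {i : Fin m}

@[simp] lemma mem_armsIn : i ∈ armsIn A S ↔ A i ⊆ S := by simp [armsIn]

@[simp] lemma mem_armsMeeting : i ∈ armsMeeting A S ↔ (A i ∩ S).Nonempty := by
  simp [armsMeeting]

namespace IsSpike

variable {s t : ℕ} {e : α}

lemma arm_ncard (hA : M.IsSpike s t A) (i : Fin m) : (A i).ncard = 2 := hA.2.2.2.1 i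

lemma arm_finite (hA : M.IsSpike s t A) (i : Fin m) : (A i).Finite :=
  finite_of_ncard_ne_zero (by simp [hA.arm_ncard i])

lemma arm_nonempty (hA : M.IsSpike s t A) (i : Fin m) : (A i).Nonempty :=
  nonempty_of_ncard_ne_zero (by simp [hA.arm_ncard i])

lemma iUnion_eq (hA : M.IsSpike s t A) : ⋃ i, A i = M.E := hA.2.1

lemma arm_subset_ground (hA : M.IsSpike s t A) (i : Fin m) : A i ⊆ M.E :=
  hA.iUnion_eq ▸ subset_iUnion A i

lemma ground_finite (hA : M.IsSpike s t A) : M.E.Finite :=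
  hA.iUnion_eq ▸ finite_iUnion hA.arm_finite

lemma pairwise_disjoint (hA : M.IsSpike s t A) : Pairwise (Disjoint on A) := hA.2.2.1

lemma eq_of_mem (hA : M.IsSpike s t A) {i j : Fin m} (hi : e ∈ A i) (hj : e ∈ A j) : i = j :=
  by_contra fun hij => disjoint_left.1 (hA.pairwise_disjoint hij) hi hj

lemma isCircuit_biUnion (hA : M.IsSpike s t A) {I : Finset (Fin m)} (hI : I.card = s) :
    M.IsCircuit (⋃ i ∈ I, A i) :=
  hA.2.2.2.2.1 I hI

lemma isCocircuit_biUnion (hA : M.IsSpike s t A) {I : Finset (Fin m)} (hI : I.card = t) :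
    M.IsCocircuit (⋃ i ∈ I, A i) :=
  hA.2.2.2.2.2 I hI

lemma dual (hA : M.IsSpike s t A) : M✶.IsSpike t s A :=
  ⟨max_comm s t ▸ hA.1, hA.iUnion_eq, hA.pairwise_disjoint, hA.arm_ncard,
    fun _ hI => hA.isCocircuit_biUnion hI,
    fun _ hI => by rw [IsCocircuit', dual_dual]; exact hA.isCircuit_biUnion hI⟩

lemma armsIn_subset_armsMeeting (hA : M.IsSpike s t A) (S : Set α) :
    armsIn A S ⊆ armsMeeting A S := by
  intro i hi
  rw [mem_armsIn] at hi
  simpa [inter_eq_left.2 hi] using hA.arm_nonempty i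

lemma card_armsMeeting_add_card_armsIn_sdiff (hA : M.IsSpike s t A) (S : Set α) :
    (armsMeeting A S).card + (armsIn A (M.E \ S)).card = m := by
  classical
  have hcompl : armsIn A (M.E \ S) = Finset.univ.filter fun i => ¬ (A i ∩ S).Nonempty := by
    ext i
    simp [subset_sdiff, hA.arm_subset_ground i, disjoint_iff_inter_eq_empty,
      not_nonempty_iff_eq_empty]
  rw [hcompl, armsMeeting, Finset.card_filter_add_card_filter_not, Finset.card_univ,
    Fintype.card_fin]

lemma indep_biUnion_of_card_lt (hA : M.IsSpike s t A) {G : Finset (Fin m)} (hG : G.card < s) :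
    M.Indep (⋃ i ∈ G, A i) := by
  obtain ⟨H, hGH, -, hH⟩ := Finset.exists_subsuperset_card_eq (Finset.subset_univ G) hG.le
    (by simpa using (le_max_left s t).trans hA.1)
  obtain ⟨i, hiH, hiG⟩ := Finset.exists_mem_notMem_of_card_lt_card (hH ▸ hG)
  obtain ⟨e, he⟩ := hA.arm_nonempty i
  refine (hA.isCircuit_biUnion hH).ssubset_indep
    (ssubset_of_subset_not_subset (biUnion_subset_biUnion_left hGH) fun h => ?_)
  obtain ⟨j, hjG, hej⟩ := mem_iUnion₂.1 (h (mem_biUnion hiH he))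
  exact hiG (hA.eq_of_mem he hej ▸ hjG)

lemma indep_iUnion (hA : M.IsSpike s t A) (ht : 1 ≤ t) {B : Fin m → Set α}
    (hBA : ∀ i, B i ⊆ A i) {G F : Finset (Fin m)} (hG : G.card < s) (hF : F.card + t ≤ m + 1)
    (hBG : ∀ i ∉ G, (B i).Subsingleton) (hBF : ∀ i ∉ F, B i = ∅) :
    M.Indep (⋃ i, B i) := by
  have hZA : ∀ j, (⋃ i, B i) ∩ A j = B j := fun j => by
    refine subset_antisymm ?_ (subset_inter (subset_iUnion B j) (hBA j))
    rintro e ⟨he, hej⟩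
    obtain ⟨i, hei⟩ := mem_iUnion.1 he
    rwa [← hA.eq_of_mem (hBA i hei) hej]
  by_contra hZ
  obtain ⟨C, hCZ, hC⟩ := ((not_indep_iff (iUnion_subset fun i =>
    (hBA i).trans (hA.arm_subset_ground i))).1 hZ).exists_isCircuit_subset
  by_cases hsingle : ∃ j ∉ G, ∃ e ∈ C, e ∈ B j
  · obtain ⟨j, hjG, e, heC, hej⟩ := hsingle
    have hjF : j ∈ F := by_contra fun h => by simp [hBF j h] at hej
    obtain ⟨T, hT, hTcard⟩ := Finset.exists_subset_card_eq (s := Finset.univ \ F) (n := t - 1)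
      (by rw [Finset.card_univ_sdiff, Fintype.card_fin]; omega)
    have hjT : j ∉ T := fun h => (Finset.mem_sdiff.1 (hT h)).2 hjF
    have hK := hA.isCocircuit_biUnion (I := insert j T)
      (by rw [Finset.card_insert_of_notMem hjT, hTcard]; omega)
    refine hC.inter_isCocircuit_ne_singleton hK (e := e) (subset_antisymm ?_ ?_)
    · rintro x ⟨hxC, hxK⟩
      obtain ⟨i, hi, hxi⟩ := mem_iUnion₂.1 hxK
      have hxB : x ∈ B i := hZA i ▸ ⟨hCZ hxC, hxi⟩
      obtain rfl | hiT := Finset.mem_insert.1 hi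
      · exact hBG i hjG hxB hej
      · simp [hBF i (Finset.mem_sdiff.1 (hT hiT)).2] at hxB
    · rintro x rfl
      exact ⟨heC, mem_biUnion (Finset.mem_insert_self j T) (hBA j hej)⟩
  · push Not at hsingle
    refine hC.dep.not_indep ((hA.indep_biUnion_of_card_lt hG).subset fun e heC => ?_)
    obtain ⟨i, hei⟩ := mem_iUnion.1 (hCZ heC)
    by_cases hiG : i ∈ G
    · exact mem_biUnion hiG (hBA i hei)
    · exact absurd hei (hsingle i hiG e heC)

lemma ncard_arm_inter_le (hA : M.IsSpike s t A) (S : Set α) (i : Fin m) :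
    (A i ∩ S).ncard ≤
      (if i ∈ armsIn A S then 1 else 0) + (if i ∈ armsMeeting A S then 1 else 0) := by
  by_cases hin : A i ⊆ S
  · simp [hin, inter_eq_left.2 hin, hA.arm_ncard,
      hA.armsIn_subset_armsMeeting S (mem_armsIn.2 hin)]
  by_cases hmeet : (A i ∩ S).Nonempty
  · have := ncard_lt_ncard (inter_subset_left.ssubset_of_ne fun h => hin (inter_eq_left.1 h))
      (hA.arm_finite i)
    rw [hA.arm_ncard] at this
    simp only [mem_armsIn, hin, mem_armsMeeting, hmeet, if_true, if_false]
    omega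
  · simp [not_nonempty_iff_eq_empty.1 hmeet]

lemma ncard_le_card_armsIn_add_card_armsMeeting (hA : M.IsSpike s t A) {S : Set α}
    (hS : S ⊆ M.E) : S.ncard ≤ (armsIn A S).card + (armsMeeting A S).card := by
  have hSeq : ⋃ i, A i ∩ S = S := by rw [← iUnion_inter, hA.iUnion_eq, inter_eq_right.2 hS]
  calc S.ncard = (⋃ i, A i ∩ S).ncard := by rw [hSeq]
    _ ≤ ∑ i, (A i ∩ S).ncard := ncard_iUnion_le_of_fintype _
    _ ≤ ∑ i, ((if i ∈ armsIn A S then 1 else 0) + (if i ∈ armsMeeting A S then 1 else 0)) :=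
      Finset.sum_le_sum fun i _ => hA.ncard_arm_inter_le S i
    _ = (armsIn A S).card + (armsMeeting A S).card := by
      rw [Finset.sum_add_distrib, Finset.sum_boole, Finset.sum_boole]
      simp

lemma min_add_min_le_rk' (hA : M.IsSpike s t A) (hs : 1 ≤ s) (ht : 1 ≤ t) (hst : s + t ≤ m + 2)
    (S : Set α) :
    min (armsIn A S).card (s - 1) + min (armsMeeting A S).card (m - t + 1) ≤ M.rk' S := by
  classical
  have htm : t ≤ m := (le_max_right s t).trans hA.1
  have hpq := Finset.card_le_card (hA.armsIn_subset_armsMeeting S)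
  obtain ⟨G, hGS, hG⟩ := Finset.exists_subset_card_eq (min_le_left (armsIn A S).card (s - 1))
  obtain ⟨F, hGF, hFS, hF⟩ := Finset.exists_subsuperset_card_eq
    (hGS.trans (hA.armsIn_subset_armsMeeting S)) (n := min (armsMeeting A S).card (m - t + 1))
    (by omega) (min_le_left _ _)
  have hpick : ∀ i, ∃ x, i ∈ armsMeeting A S → x ∈ A i ∩ S := fun i =>
    if h : (A i ∩ S).Nonempty then ⟨h.choose, fun _ => h.choose_spec⟩
    else ⟨(hA.arm_nonempty i).choose, fun hi => absurd (mem_armsMeeting.1 hi) h⟩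
  choose f hf using hpick
  set B : Fin m → Set α := fun i => if i ∈ G then A i else if i ∈ F then {f i} else ∅ with hB
  have hBA : ∀ i, B i ⊆ A i ∩ S := by
    intro i
    simp only [hB]
    split_ifs with hiG hiF
    · exact subset_inter subset_rfl (mem_armsIn.1 (hGS hiG))
    · exact singleton_subset_iff.2 (hf i (hFS hiF))
    · exact empty_subset _
  have hBcard : ∀ i, (B i).ncard = (if i ∈ G then 1 else 0) + (if i ∈ F then 1 else 0) := by
    intro i
    by_cases hiG : i ∈ G
    · simp [hB, hiG, hGF hiG, hA.arm_ncard]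
    · by_cases hiF : i ∈ F <;> simp [hB, hiG, hiF]
  have hZ : (⋃ i, B i).ncard = G.card + F.card := by
    rw [ncard_iUnion_of_finite (fun i => (hA.arm_finite i).subset ((hBA i).trans inter_subset_left))
      (fun i j hij => (hA.pairwise_disjoint hij).mono ((hBA i).trans inter_subset_left)
        ((hBA j).trans inter_subset_left)), finsum_eq_sum_of_fintype]
    simp [hBcard, Finset.sum_add_distrib]
  have hind := hA.indep_iUnion ht (fun i => (hBA i).trans inter_subset_left) (G := G) (F := F)
    (by omega) (by omega) (fun i hi => by simp only [hB, hi, if_false]; split_ifs <;> simp)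
    (fun i hi => by simp [hB, hi, show i ∉ G from fun h => hi (hGF h)])
  calc _ = (⋃ i, B i).ncard := by rw [hZ, hG, hF]
    _ ≤ M.rk' S := hind.ncard_le_rk'_of_subset hA.ground_finite
      (iUnion_subset fun i => (hBA i).trans inter_subset_right)

lemma rk'_ground_add_le (hA : M.IsSpike s t A) (hs : 1 ≤ s) (ht : 1 ≤ t) (hst : s + t ≤ m + 2) :
    M.rk' M.E + t ≤ m + s := by
  have hin : armsIn A M.E = Finset.univ :=
    Finset.eq_univ_of_forall fun i => mem_armsIn.2 (hA.arm_subset_ground i)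
  have hmeet : armsMeeting A M.E = Finset.univ := Finset.eq_univ_of_forall fun i =>
    hA.armsIn_subset_armsMeeting M.E (hin ▸ Finset.mem_univ i)
  have hdual := hA.dual.min_add_min_le_rk' ht hs (by omega) M.E
  have hE := hA.ncard_le_card_armsIn_add_card_armsMeeting subset_rfl
  rw [hin, hmeet, Finset.card_univ, Fintype.card_fin] at hdual hE
  have := rk'_ground_add_rk'_dual_ground hA.ground_finite
  have hsm : s ≤ m := (le_max_left s t).trans hA.1
  omega

end IsSpike

end Matroid

/-- If `min{s,t} ≥ 2` and `M` is an `(s,t)`-spike of order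
`m ≥ max{3s+t, s+3t} − 4`, then `M` is `(2·min{s,t} − 1)`-connected: for every `k` with
`k < 2·min{s,t} − 1` there is no partition `(P,Q)` of `E(M)` with `|P| ≥ k`, `|Q| ≥ k` and
`λ(P) ≤ k − 1`. -/
theorem statement18 {α : Type u} (s t m : ℕ) (hs : 2 ≤ s) (ht : 2 ≤ t)
    (M : Matroid α) (A : Fin m → Set α) (hA : M.IsSpike s t A)
    (hm : max (3 * s + t) (s + 3 * t) - 4 ≤ m) :
    ∀ k : ℕ, k < 2 * min s t - 1 →
      ¬ ∃ P Q : Set α, P ∪ Q = M.E ∧ Disjoint P Q ∧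
        k ≤ P.ncard ∧ k ≤ Q.ncard ∧ (M.lam' P : ℤ) ≤ (k : ℤ) - 1 := by
  rintro k hk ⟨P, Q, hPQ, hdisj, hkP, hkQ, hlam⟩
  have hsm : s ≤ m := (le_max_left s t).trans hA.1
  have htm : t ≤ m := (le_max_right s t).trans hA.1
  have hst : s + t ≤ m + 2 := by omega
  have hQ : M.E \ P = Q := by rw [← hPQ, union_sdiff_left, hdisj.sdiff_eq_right]
  have hP : M.E \ Q = P := by rw [← hPQ, union_sdiff_right, hdisj.sdiff_eq_left]
  have hrP := hA.min_add_min_le_rk' (by omega) (by omega) hst P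
  have hrQ := hA.min_add_min_le_rk' (by omega) (by omega) hst Q
  have hrE := hA.rk'_ground_add_le (by omega) (by omega) hst
  have hmP := hA.card_armsMeeting_add_card_armsIn_sdiff P
  have hmQ := hA.card_armsMeeting_add_card_armsIn_sdiff Q
  have hcP := hA.ncard_le_card_armsIn_add_card_armsMeeting (hPQ ▸ subset_union_left)
  have hcQ := hA.ncard_le_card_armsIn_add_card_armsMeeting (hPQ ▸ subset_union_right)
  have hpP := Finset.card_le_card (hA.armsIn_subset_armsMeeting P)
  rw [hQ] at hmP
  rw [hP] at hmQ
  rw [lam', hQ] at hlam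
  omega
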